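/- Let a, b, n be positive integers with b < a < n, a + b even, b·n even, and (a + b + 1)² > 4bn + 1. Set s = (a + b)/2. Then the sequence (a^s, b^{n−s}) has even sum, has length n, maximal element a, minimal element b, and is nongraphic. -/
import Mathlib

/-- A sequence of length `n` is graphic if it is the degree sequence of some
finite simple graph on `n` vertices. -/
def IsGraphic {n : ℕ} (d : Fin n → ℕ) : Prop :=
  ∃ G : SimpleGraph (Fin n), ∀ i, (G.neighborSet i).ncard = d i

/-- `twoBlock a b s : Fin n → ℕ` is the sequence `(a^s, b^{n-s})`. -/
def twoBlock (a b s : ℕ) {n : ℕ} : Fin n → ℕ := fun i => if (i : ℕ) < s then a else b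

open Finset in
lemma card_filter_lt_fin (n s : ℕ) (hs : s ≤ n) :
    #(Finset.univ.filter (fun i : Fin n => (i : ℕ) < s)) = s := by
  rcases Nat.eq_or_lt_of_le hs with rfl | hs'
  · rw [Finset.filter_true_of_mem (fun i _ => i.isLt)]
    simp
  · have : Finset.univ.filter (fun i : Fin n => (i : ℕ) < s) = Finset.Iio ⟨s, hs'⟩ := by
      ext i; simp [Fin.lt_def]
    rw [this, Fin.card_Iio]

open Finset in
lemma deg_sum_bound {n : ℕ} (G : SimpleGraph (Fin n)) [DecidableRel G.Adj] (s : ℕ)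
    (hs : s ≤ n) :
    ∑ i ∈ Finset.univ.filter (fun i : Fin n => (i : ℕ) < s), G.degree i
      ≤ s * (s - 1) +
        ∑ j ∈ Finset.univ.filter (fun j : Fin n => ¬ (j : ℕ) < s), G.degree j := by
  classical
  set S := Finset.univ.filter (fun i : Fin n => (i : ℕ) < s) with hS
  set T := Finset.univ.filter (fun j : Fin n => ¬ (j : ℕ) < s) with hT
  have hcard : S.card = s := card_filter_lt_fin n s hs
  have hdeg : ∀ i : Fin n, G.degree i = ∑ j : Fin n, if G.Adj i j then 1 else 0 := by
    intro i
    rw [SimpleGraph.degree, SimpleGraph.neighborFinset_eq_filter, Finset.card_filter]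
  have hsplit : ∀ i : Fin n, G.degree i
      = (∑ j ∈ S, if G.Adj i j then 1 else 0) + (∑ j ∈ T, if G.Adj i j then 1 else 0) := by
    intro i
    rw [hdeg i, hS, hT, Finset.sum_filter_add_sum_filter_not]
  calc ∑ i ∈ S, G.degree i
      = (∑ i ∈ S, ∑ j ∈ S, if G.Adj i j then 1 else 0)
        + (∑ i ∈ S, ∑ j ∈ T, if G.Adj i j then 1 else 0) := by
        rw [← Finset.sum_add_distrib]; exact Finset.sum_congr rfl fun i _ => hsplit i
    _ ≤ s * (s - 1) + ∑ j ∈ T, G.degree j := by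
        gcongr with hfoo hbar
        · calc ∑ i ∈ S, ∑ j ∈ S, (if G.Adj i j then 1 else 0)
              ≤ ∑ i ∈ S, (s - 1) := by
                apply Finset.sum_le_sum
                intro i hi
                have : (∑ j ∈ S, if G.Adj i j then 1 else 0)
                    = (S.filter (fun j => G.Adj i j)).card := (Finset.card_filter _ _).symm
                rw [this]
                have hsub : S.filter (fun j => G.Adj i j) ⊆ S.erase i := by
                  intro j hj
                  simp only [Finset.mem_filter] at hj
                  exact Finset.mem_erase.2 ⟨fun h => G.ne_of_adj hj.2 h.symm, hj.1⟩
                calc (S.filter (fun j => G.Adj i j)).card ≤ (S.erase i).card :=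
                      Finset.card_le_card hsub
                  _ = s - 1 := by rw [Finset.card_erase_of_mem hi, hcard]
            _ = s * (s - 1) := by rw [Finset.sum_const, hcard, smul_eq_mul]
        · rw [Finset.sum_comm]
          apply Finset.sum_le_sum
          intro j hj
          rw [hdeg j]
          have : ∀ i : Fin n, (if G.Adj i j then (1:ℕ) else 0) = if G.Adj j i then 1 else 0 := by
            intro i; simp [G.adj_comm]
          simp only [this]
          exact Finset.sum_le_sum_of_subset (Finset.subset_univ S)

/-- Case (III) of sharpness: if `b < a < n`, `a + b` even, `bn` even and
`(a+b+1)² > 4bn + 1`, then with `s = (a+b)/2` the sequence `(a^s, b^{n-s})` has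
even sum, maximal element `a`, minimal element `b`, and is nongraphic. -/
theorem sharpness_case_III (a b n : ℕ) (hb : 0 < b) (hba : b < a) (han : a < n)
    (hab : Even (a + b)) (hbn : Even (b * n)) (hgt : (a + b + 1) ^ 2 > 4 * (b * n) + 1) :
    Even (∑ i : Fin n, twoBlock a b ((a + b) / 2) i) ∧
      twoBlock a b ((a + b) / 2) (n := n) ⟨0, by omega⟩ = a ∧
      twoBlock a b ((a + b) / 2) (n := n) ⟨n - 1, by omega⟩ = b ∧
      ¬ IsGraphic (twoBlock a b ((a + b) / 2) (n := n)) := by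
  classical
  obtain ⟨t, ht⟩ := hab
  set s := (a + b) / 2 with hsdef
  have h2s : 2 * s = a + b := by omega
  have hs_pos : 0 < s := by omega
  have hs_lt_a : s < a := by omega
  have hs_lt_n : s < n := by omega
  have hs_le_n : s ≤ n := hs_lt_n.le
  set S := Finset.univ.filter (fun i : Fin n => (i : ℕ) < s) with hS
  have hcardS : S.card = s := card_filter_lt_fin n s hs_le_n
  have hcardT : (Finset.univ.filter (fun i : Fin n => ¬ (i : ℕ) < s)).card = n - s := by
    have h := Finset.card_filter_add_card_filter_not
      (s := (Finset.univ : Finset (Fin n))) (p := fun i : Fin n => (i : ℕ) < s)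
    rw [Finset.card_univ, Fintype.card_fin] at h
    rw [← hS] at h
    omega
  have hsum : ∑ i : Fin n, twoBlock a b s i = s * a + (n - s) * b := by
    unfold twoBlock
    rw [Finset.sum_ite, Finset.sum_const, Finset.sum_const]
    simp only [smul_eq_mul]
    rw [hcardS, hcardT]
  refine ⟨?_, ?_, ?_, ?_⟩
  · rw [hsum]
    have hid : s * a + (n - s) * b = s * (a - b) + b * n := by
      zify [hs_le_n, hba.le]; ring
    rw [hid]
    exact (Even.mul_left (⟨(a - b) / 2, by omega⟩ : Even (a - b)) s).add hbn
  · simp [twoBlock, hs_pos]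
  · simp only [twoBlock]
    rw [if_neg]; omega
  · rintro ⟨G, hG⟩
    have hdeg : ∀ i : Fin n, G.degree i = twoBlock a b s i := by
      intro i
      rw [← hG i, SimpleGraph.degree, SimpleGraph.neighborFinset, Set.ncard_eq_toFinset_card']
    have hb1 := deg_sum_bound G s hs_le_n
    have hL : ∑ i ∈ S, G.degree i = s * a := by
      have h1 : ∀ i ∈ S, G.degree i = a := fun i hi => by
        rw [hdeg i]
        simp only [hS, Finset.mem_filter] at hi
        simp [twoBlock, hi.2]
      rw [Finset.sum_congr rfl h1, Finset.sum_const, hcardS, smul_eq_mul]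
    have hR : ∑ j ∈ Finset.univ.filter (fun j : Fin n => ¬ (j : ℕ) < s), G.degree j
        = (n - s) * b := by
      have h1 : ∀ j ∈ Finset.univ.filter (fun j : Fin n => ¬ (j : ℕ) < s),
          G.degree j = b := fun j hj => by
        rw [hdeg j]
        simp only [Finset.mem_filter] at hj
        simp [twoBlock, hj.2]
      rw [Finset.sum_congr rfl h1, Finset.sum_const, hcardT, smul_eq_mul]
    rw [← hS] at hb1
    rw [hL, hR] at hb1
    -- hb1 : s * a ≤ s * (s - 1) + (n - s) * b
    -- hgt gives s * (s + 1) > b * n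
    have key : s * (s + 1) > b * n := by nlinarith [h2s]
    have ha2 : a = 2 * s - b := by omega
    zify [hs_le_n, hs_pos, hba.le] at hb1 key ⊢
    nlinarith [hb1, key, h2s]
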